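/- arXiv:2603.17434 — 8 statements merged into one kernel-verified Lean document; each statement's English description precedes it below -/
import Mathlib

section
/- For every integer i ≥ 1 and every integer k ≥ 2, the integer a = G_{i-1}(k) belongs to 𝒜(G_i(k)); that is, 1 ≤ G_{i-1}(k) < G_i(k), G_i(k) divides G_{i-1}(k)² − 1, and G_{i-1}(k) divides G_i(k)² − 1. -/
/-- Fibonacci-like polynomials evaluated at an integer:
`G 0 k = 1`, `G 1 k = k`, `G (i+2) k = k * G (i+1) k - G i k`. -/
def G : ℕ → ℤ → ℤ
  | 0, _ => 1
  | 1, k => k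
  | (i + 2), k => k * G (i + 1) k - G i k

/-- `A n = {a : 1 ≤ a < n, n ∣ a² − 1, a ∣ n² − 1}`. -/
def A (n : ℕ) : Finset ℕ :=
  (Finset.Ico 1 n).filter (fun a => (n : ℤ) ∣ (a : ℤ) ^ 2 - 1 ∧ (a : ℤ) ∣ (n : ℤ) ^ 2 - 1)

lemma G_key (k : ℤ) : ∀ i : ℕ,
    G i k ^ 2 + G (i + 1) k ^ 2 - k * G i k * G (i + 1) k = 1 := by
  intro i
  induction i with
  | zero => simp [G]; ring
  | succ n ih =>
      have h : G (n + 2) k = k * G (n + 1) k - G n k := rfl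
      rw [h]
      nlinarith [ih]

lemma G_mono (k : ℤ) (hk : 2 ≤ k) : ∀ i : ℕ, 1 ≤ G i k ∧ G i k < G (i + 1) k := by
  intro i
  induction i with
  | zero => constructor <;> simp [G] <;> linarith
  | succ n ih =>
      obtain ⟨h1, h2⟩ := ih
      have h : G (n + 2) k = k * G (n + 1) k - G n k := rfl
      constructor
      · linarith
      · rw [h]; nlinarith

theorem stmt_2 (i : ℕ) (hi : 1 ≤ i) (k : ℤ) (hk : 2 ≤ k) :
    1 ≤ G (i - 1) k ∧ G (i - 1) k < G i k ∧
      G i k ∣ G (i - 1) k ^ 2 - 1 ∧ G (i - 1) k ∣ G i k ^ 2 - 1 := by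
  obtain ⟨j, rfl⟩ : ∃ j, i = j + 1 := ⟨i - 1, (Nat.succ_pred_eq_of_pos hi).symm⟩
  simp only [Nat.add_sub_cancel]
  obtain ⟨h1, h2⟩ := G_mono k hk j
  have key := G_key k j
  refine ⟨h1, h2, ⟨k * G j k - G (j + 1) k, by linear_combination key⟩,
    ⟨k * G (j + 1) k - G j k, by linear_combination key⟩⟩
end

section
/- Let n > 1 and let a be an integer with 1 < a < n such that n divides a² − 1 and a divides n² − 1. Then a·n divides n² + a² − 1, and setting z = (n² + a² − 1)/(a·n) and r = z·a − n, one has r = (a² − 1)/n, 1 ≤ r < a, a divides r² − 1, r divides a² − 1, and a² + r² − 1 = z·a·r. -/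
theorem stmt_5 (n a : ℤ) (hn : 1 < n) (ha : 1 < a) (han : a < n)
    (h1 : n ∣ a ^ 2 - 1) (h2 : a ∣ n ^ 2 - 1) :
    a * n ∣ n ^ 2 + a ^ 2 - 1 ∧
      ∀ z r : ℤ, z = (n ^ 2 + a ^ 2 - 1) / (a * n) → r = z * a - n →
        r = (a ^ 2 - 1) / n ∧ 1 ≤ r ∧ r < a ∧ a ∣ r ^ 2 - 1 ∧ r ∣ a ^ 2 - 1 ∧
          a ^ 2 + r ^ 2 - 1 = z * a * r := by
  obtain ⟨k, hk⟩ := h2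
  have hcop : IsCoprime a n := ⟨-k, n, by linarith [hk]⟩
  have hda : a ∣ n ^ 2 + a ^ 2 - 1 := ⟨k + a, by linarith [hk]⟩
  have hdn : n ∣ n ^ 2 + a ^ 2 - 1 := by
    obtain ⟨m, hm⟩ := h1
    exact ⟨n + m, by linarith [hm]⟩
  have hdvd : a * n ∣ n ^ 2 + a ^ 2 - 1 := hcop.mul_dvd hda hdn
  refine ⟨hdvd, ?_⟩
  obtain ⟨z0, hz0⟩ := hdvd
  have hanpos : a * n ≠ 0 := by positivity
  have hnpos : (0:ℤ) < n := by linarith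
  intro z r hz hr
  have hzz : z = z0 := by
    rw [hz, hz0, Int.mul_ediv_cancel_left _ hanpos]
  subst hzz hr
  have hrn : (z * a - n) * n = a ^ 2 - 1 := by nlinarith [hz]
  have hr1 : z * a - n = (a ^ 2 - 1) / n := by
    rw [← hrn, Int.mul_ediv_cancel _ hnpos.ne']
  have hrge : 1 ≤ z * a - n := by nlinarith [hrn]
  have hrlt : z * a - n < a := by nlinarith [hrn]
  refine ⟨hr1, hrge, hrlt, ⟨a * (a ^ 2 - 2) - (z * a - n) ^ 2 * k, by nlinarith [hrn, hk]⟩,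
    ⟨n, by linarith [hrn]⟩, by nlinarith [hrn]⟩
end

section
/- Let n > 2 and let a ∈ 𝒜(n) with a ≠ 1 and a ≠ n − 1. Then there exists a unique integer z ≥ 3 such that a and n are consecutive terms of the sequence (G_i(z))_{i≥0}; that is, there exists i ≥ 1 with G_i(z) = a and G_{i+1}(z) = n. -/
lemma G_zero (k : ℤ) : G 0 k = 1 := rfl
lemma G_one (k : ℤ) : G 1 k = k := rfl
lemma G_step (i : ℕ) (k : ℤ) : G (i + 2) k = k * G (i + 1) k - G i k := rfl

lemma G_invariant (z : ℤ) : ∀ i : ℕ,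
    (G i z) ^ 2 + (G (i + 1) z) ^ 2 - z * G i z * G (i + 1) z = 1 := by
  intro i
  induction i with
  | zero => simp [G_zero, G_one]; ring
  | succ j ih =>
    rw [G_step]
    linear_combination ih

lemma descent (z : ℤ) (hz : 3 ≤ z) : ∀ m : ℕ, ∀ x y : ℤ, x.toNat = m → 1 ≤ x → x < y →
    x ^ 2 + y ^ 2 - z * x * y = 1 → ∃ i : ℕ, G i z = x ∧ G (i + 1) z = y := by
  intro m
  induction m using Nat.strong_induction_on with
  | _ m ih =>
    intro x y hm hx hxy hinv
    have hy0 : 0 < y := by linarith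
    rcases eq_or_lt_of_le hx with h1 | h1
    · -- x = 1
      have hy : y = z := by
        have h0 : (y - z) * y = 0 := by nlinarith
        rcases mul_eq_zero.mp h0 with h | h
        · linarith
        · linarith
      exact ⟨0, by simp [G_zero, ← h1], by simp [G_one, hy]⟩
    · -- x ≥ 2
      have hx2 : 2 ≤ x := h1
      set w : ℤ := z * x - y with hw
      have hwy : w * y = x ^ 2 - 1 := by linear_combination -hinv
      have hw1 : 1 ≤ w := by
        by_contra h
        push_neg at h
        have : w ≤ 0 := by linarith
        have := mul_nonpos_of_nonpos_of_nonneg this (le_of_lt hy0)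
        nlinarith
      have hwx : w < x := by
        have h2 : w * y < x * y := by nlinarith
        exact lt_of_mul_lt_mul_right h2 (le_of_lt hy0)
      have hinv' : w ^ 2 + x ^ 2 - z * w * x = 1 := by linear_combination hinv
      have hmlt : w.toNat < m := by omega
      obtain ⟨i, hi1, hi2⟩ := ih w.toNat hmlt w x rfl hw1 hwx hinv'
      refine ⟨i + 1, hi2, ?_⟩
      rw [G_step, hi1, hi2]
      ring

theorem stmt_6 (n : ℕ) (hn : 2 < n) (a : ℕ) (ha : a ∈ A n) (ha1 : a ≠ 1) (ha2 : a ≠ n - 1) :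
    ∃! z : ℤ, 3 ≤ z ∧ ∃ i : ℕ, 1 ≤ i ∧ G i z = (a : ℤ) ∧ G (i + 1) z = (n : ℤ) := by
  simp only [A, Finset.mem_filter, Finset.mem_Ico] at ha
  obtain ⟨⟨ha1', han⟩, hnd, had⟩ := ha
  have ha2' : 2 ≤ a := by omega
  have hale : a + 2 ≤ n := by omega
  have hA : (2 : ℤ) ≤ (a : ℤ) := by exact_mod_cast ha2'
  have hN : (a : ℤ) + 2 ≤ (n : ℤ) := by exact_mod_cast hale
  obtain ⟨c, hc⟩ := hnd
  obtain ⟨d, hd⟩ := had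
  have hdvd : (a : ℤ) * n ∣ (a : ℤ) ^ 2 + (n : ℤ) ^ 2 - 1 := by
    have hcop : IsCoprime (a : ℤ) (n : ℤ) := ⟨(a : ℤ), -c, by linear_combination hc⟩
    exact hcop.mul_dvd ⟨(a : ℤ) + d, by linear_combination hd⟩
      ⟨(n : ℤ) + c, by linear_combination hc⟩
  obtain ⟨z, hz⟩ := hdvd
  have hzan : (a : ℤ) ^ 2 + (n : ℤ) ^ 2 - z * a * n = 1 := by linear_combination hz
  have hz3 : 3 ≤ z := by
    by_contra h
    push_neg at h
    have hzle : z ≤ 2 := by linarith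
    have h0 : (0 : ℤ) ≤ (a : ℤ) * n * (2 - z) := by
      apply mul_nonneg (by positivity) (by linarith)
    nlinarith
  obtain ⟨i, hi1, hi2⟩ := descent z hz3 (a : ℤ).toNat (a : ℤ) (n : ℤ) rfl (by linarith)
    (by linarith) hzan
  have hige : 1 ≤ i := by
    rcases i with _ | i
    · rw [G_zero] at hi1; omega
    · omega
  refine ⟨z, ⟨hz3, i, hige, hi1, hi2⟩, ?_⟩
  rintro z' ⟨hz'3, j, hj1, hGj, hGj1⟩
  have inv := G_invariant z' j
  rw [hGj, hGj1] at inv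
  have h0 : (z' - z) * ((a : ℤ) * n) = 0 := by linear_combination hzan - inv
  rcases mul_eq_zero.mp h0 with h | h
  · linarith
  · nlinarith
end

section
/- Suppose an integer n satisfies n = G_i(k) = G_j(k′) where k′ > k ≥ 2 and i, j ≥ 2. Then j < i. -/
lemma G_pos_mono (k : ℤ) (hk : 2 ≤ k) : ∀ i, 1 ≤ G i k ∧ G i k < G (i+1) k := by
  intro i
  induction i with
  | zero => exact ⟨le_refl 1, by show (1:ℤ) < k; linarith⟩
  | succ i ih =>
    obtain ⟨h1, h2⟩ := ih
    refine ⟨by linarith, ?_⟩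
    show G (i+1) k < k * G (i+1) k - G i k
    nlinarith

lemma G_index_mono (k : ℤ) (hk : 2 ≤ k) {i j : ℕ} (h : i ≤ j) : G i k ≤ G j k := by
  induction j with
  | zero => simp_all
  | succ j ih =>
    rcases Nat.lt_or_ge i (j+1) with h' | h'
    · exact le_trans (ih (Nat.lt_succ_iff.mp h')) (le_of_lt (G_pos_mono k hk j).2)
    · have : i = j + 1 := le_antisymm h h'
      simp [this]

lemma G_diff_mono (k k' : ℤ) (hk : 2 ≤ k) (hkk' : k < k') :
    ∀ i, 0 ≤ G i k' - G i k ∧ G i k' - G i k ≤ G (i+1) k' - G (i+1) k := by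
  intro i
  induction i with
  | zero =>
    refine ⟨by simp [G], ?_⟩
    show (1:ℤ) - 1 ≤ k' - k
    linarith
  | succ i ih =>
    obtain ⟨h1, h2⟩ := ih
    refine ⟨by linarith, ?_⟩
    show G (i+1) k' - G (i+1) k ≤ (k' * G (i+1) k' - G i k') - (k * G (i+1) k - G i k)
    have hg := (G_pos_mono k hk (i+1)).1
    nlinarith

lemma G_k_strict (k k' : ℤ) (hk : 2 ≤ k) (hkk' : k < k') :
    ∀ i, 1 ≤ i → G i k + 1 ≤ G i k' := by
  intro i
  induction i with
  | zero => omega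
  | succ i ih =>
    intro _
    rcases Nat.eq_zero_or_pos i with h | h
    · subst h; show k + 1 ≤ k'; linarith
    · have := ih h
      have := (G_diff_mono k k' hk hkk' i).2
      linarith

theorem stmt_13 (n : ℤ) (k k' : ℤ) (hk : 2 ≤ k) (hkk' : k < k') (i j : ℕ)
    (hi : 2 ≤ i) (hj : 2 ≤ j) (hik : n = G i k) (hjk : n = G j k') :
    j < i := by
  by_contra h
  push_neg at h
  have h1 : G i k ≤ G j k := G_index_mono k hk h
  have h2 : G j k + 1 ≤ G j k' := G_k_strict k k' hk hkk' j (by omega)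
  omega
end

section
/- For every integer n ≥ 2, the number of integers k ≥ 3 such that n appears in the chain 𝔠_k (i.e., n = G_i(k) for some i ≥ 2) is strictly less than log₂ n. -/
lemma G_basic (k : ℤ) (hk : 3 ≤ k) : ∀ i, 1 ≤ G i k ∧ 2 * G i k ≤ G (i+1) k := by
  intro i
  induction i with
  | zero => simp [G]; omega
  | succ j ih =>
    obtain ⟨h1, h2⟩ := ih
    have hG : G (j+2) k = k * G (j+1) k - G j k := rfl
    constructor
    · linarith
    · nlinarith

lemma two_pow_lt_G (k : ℤ) (hk : 3 ≤ k) : ∀ i, 1 ≤ i → (2:ℤ)^i < G i k := by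
  intro i
  induction i with
  | zero => omega
  | succ j ih =>
    intro _
    rcases Nat.eq_zero_or_pos j with h0 | h0
    · subst h0; simpa [G] using (show (2:ℤ) < k by omega)
    · have h1 := ih h0
      have h2 := (G_basic k hk j).2
      have : (2:ℤ)^(j+1) = 2 * 2^j := by ring
      linarith

lemma G_strictMono (k k' : ℤ) (hk : 3 ≤ k) (hkk : k < k') :
    ∀ i, 1 ≤ G (i+1) k' - G (i+1) k ∧ G i k' - G i k < G (i+1) k' - G (i+1) k := by
  intro i
  induction i with
  | zero => simp [G]; omega
  | succ j ih =>
    obtain ⟨h1, h2⟩ := ih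
    have hG : G (j+2) k = k * G (j+1) k - G j k := rfl
    have hG' : G (j+2) k' = k' * G (j+1) k' - G j k' := rfl
    have hg1 := (G_basic k hk (j+1)).1
    constructor
    · nlinarith
    · nlinarith

lemma G_inj (k k' : ℤ) (hk : 3 ≤ k) (hk' : 3 ≤ k') (i : ℕ) (hi : 1 ≤ i)
    (h : G i k = G i k') : k = k' := by
  obtain ⟨j, rfl⟩ : ∃ j, i = j + 1 := ⟨i - 1, by omega⟩
  rcases lt_trichotomy k k' with h1 | h1 | h1
  · have := (G_strictMono k k' hk h1 j).1; omega
  · exact h1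
  · have := (G_strictMono k' k hk' h1 j).1; omega

theorem stmt_14 (n : ℕ) (hn : 2 ≤ n) :
    ({k : ℤ | 3 ≤ k ∧ ∃ i : ℕ, 2 ≤ i ∧ G i k = (n : ℤ)}.ncard : ℝ) <
      Real.logb 2 (n : ℝ) := by
  set S : Set ℤ := {k : ℤ | 3 ≤ k ∧ ∃ i : ℕ, 2 ≤ i ∧ G i k = (n : ℤ)} with hS
  set L := Nat.log 2 n with hL
  -- for k in S, index bound
  have key : ∀ k ∈ S, ∀ i : ℕ, 2 ≤ i → G i k = (n:ℤ) → 2 ≤ i ∧ i ≤ L ∧ 5 ≤ n := by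
    intro k hk i hi hGi
    obtain ⟨hk3, -⟩ := hk
    have h1 : (2:ℤ)^i < (n:ℤ) := hGi ▸ two_pow_lt_G k hk3 i (by omega)
    have h2 : 2^i < n := by exact_mod_cast h1
    have h4 : (4:ℕ) ≤ 2^i := by
      calc (4:ℕ) = 2^2 := rfl
      _ ≤ 2^i := Nat.pow_le_pow_right (by norm_num) hi
    have h5 : 5 ≤ n := by omega
    have hiL : i ≤ L := by
      rw [hL, Nat.le_log_iff_pow_le (by norm_num) (by omega)]
      omega
    exact ⟨hi, hiL, h5⟩
  rcases Set.eq_empty_or_nonempty S with hE | hNE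
  · rw [hE]
    simp only [Set.ncard_empty, Nat.cast_zero]
    have : (1:ℝ) ≤ Real.logb 2 n := by
      rw [show (1:ℝ) = Real.logb 2 2 by simp]
      exact Real.logb_le_logb_of_le (by norm_num) (by norm_num) (by exact_mod_cast hn)
    linarith
  · obtain ⟨k0, hk0⟩ := hNE
    obtain ⟨-, i0, hi0, hGi0⟩ := id hk0
    obtain ⟨-, -, hn5⟩ := key k0 hk0 i0 hi0 hGi0
    have hL2 : 2 ≤ L := by
      rw [hL, Nat.le_log_iff_pow_le (by norm_num) (by omega)]
      omega
    -- injection S → Icc 2 L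
    classical
    set f : ℤ → ℕ := fun k =>
      if h : ∃ i : ℕ, 2 ≤ i ∧ G i k = (n:ℤ) then h.choose else 0 with hf
    have hfspec : ∀ k ∈ S, 2 ≤ f k ∧ G (f k) k = (n:ℤ) := by
      intro k hk
      obtain ⟨-, hex⟩ := hk
      simp only [hf, dif_pos hex]
      exact hex.choose_spec
    have hmaps : ∀ k ∈ S, f k ∈ Set.Icc 2 L := by
      intro k hk
      obtain ⟨h1, h2⟩ := hfspec k hk
      obtain ⟨ha, hb, -⟩ := key k hk (f k) h1 h2
      exact ⟨ha, hb⟩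
    have hinj : Set.InjOn f S := by
      intro a ha b hb hab
      obtain ⟨ha1, ha2⟩ := hfspec a ha
      obtain ⟨hb1, hb2⟩ := hfspec b hb
      exact G_inj a b ha.1 hb.1 (f a) (by omega) (by rw [ha2, hab, hb2])
    have hcard : S.ncard ≤ (Set.Icc 2 L).ncard :=
      Set.ncard_le_ncard_of_injOn f hmaps hinj (Set.finite_Icc 2 L)
    have hIcc : (Set.Icc 2 L).ncard = L - 1 := by
      rw [← Finset.coe_Icc, Set.ncard_coe_finset, Nat.card_Icc]; omega
    have hlogL : (L:ℝ) ≤ Real.logb 2 n := by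
      have h2L : (2:ℕ)^L ≤ n := Nat.pow_log_le_self 2 (by omega)
      have h := Real.logb_le_logb_of_le (b := 2) (x := (2:ℝ)^L) (y := (n:ℝ)) (by norm_num)
        (by positivity) (by exact_mod_cast h2L)
      rw [Real.logb_pow] at h; simpa using h
    have : (S.ncard : ℝ) ≤ (L:ℝ) - 1 := by
      have : (S.ncard : ℝ) ≤ ((L - 1 : ℕ) : ℝ) := by
        exact_mod_cast hcard.trans hIcc.le
      have hc : ((L - 1 : ℕ) : ℝ) = (L:ℝ) - 1 := by
        rw [Nat.cast_sub (by omega)]; simp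
      linarith [hc ▸ this]
    linarith
end

section
/- For every integer n > 2, one has |𝒜(n)| < log₂ n + 2. -/
namespace Stmt15Aux

/-- The Vieta chain `0, 1, k, k²-1, …` with recurrence `x_{j+2} = k x_{j+1} - x_j`. -/
def ch (k : ℤ) : ℕ → ℤ
  | 0 => 0
  | 1 => 1
  | (j+2) => k * ch k (j+1) - ch k j

lemma ch_zero (k : ℤ) : ch k 0 = 0 := rfl
lemma ch_one (k : ℤ) : ch k 1 = 1 := rfl
lemma ch_succ (k : ℤ) (j : ℕ) : ch k (j+2) = k * ch k (j+1) - ch k j := rfl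
lemma ch_two (k : ℤ) : ch k 2 = k := by simp [ch_succ, ch_zero, ch_one]

lemma ch_base (k : ℤ) (hk : 2 ≤ k) : ∀ j, 0 ≤ ch k j ∧ ch k j ≤ ch k (j+1) := by
  intro j
  induction j with
  | zero => simp [ch_zero, ch_one]
  | succ j ih =>
    obtain ⟨h0, h1⟩ := ih
    have h2 : 0 ≤ ch k (j+1) := le_trans h0 h1
    refine ⟨h2, ?_⟩
    rw [ch_succ]
    have h3 : 2 * ch k (j+1) ≤ k * ch k (j+1) := mul_le_mul_of_nonneg_right hk h2
    linarith

lemma ch_diff (k k' : ℤ) (hk : 2 ≤ k) (hkk : k ≤ k') :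
    ∀ j, 0 ≤ ch k' j - ch k j ∧ ch k' j - ch k j ≤ ch k' (j+1) - ch k (j+1) := by
  intro j
  induction j with
  | zero => simp [ch_zero, ch_one]
  | succ j ih =>
    obtain ⟨h0, h1⟩ := ih
    have hd1 : 0 ≤ ch k' (j+1) - ch k (j+1) := le_trans h0 h1
    refine ⟨hd1, ?_⟩
    rw [ch_succ, ch_succ]
    have hc : 0 ≤ ch k' (j+1) := (ch_base k' (le_trans hk hkk) (j+1)).1
    have e1 : k' * ch k' (j+1) - k * ch k (j+1)
        = k * (ch k' (j+1) - ch k (j+1)) + (k' - k) * ch k' (j+1) := by ring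
    have e2 : 2 * (ch k' (j+1) - ch k (j+1)) ≤ k * (ch k' (j+1) - ch k (j+1)) :=
      mul_le_mul_of_nonneg_right hk hd1
    have e3 : 0 ≤ (k' - k) * ch k' (j+1) := mul_nonneg (by linarith) hc
    linarith

lemma ch_strict (k k' : ℤ) (hk : 2 ≤ k) (hkk : k < k') :
    ∀ j, ch k (j+2) < ch k' (j+2) := by
  have key : ∀ j, k' - k ≤ ch k' (j+2) - ch k (j+2) := by
    intro j
    induction j with
    | zero => simp [ch_two]
    | succ j ih =>
      have := (ch_diff k k' hk (le_of_lt hkk) (j+2)).2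
      linarith
  intro j
  have := key j
  linarith

lemma ch_growth (k : ℤ) (hk : 3 ≤ k) : ∀ j, (2:ℤ)^(j+1) < ch k (j+2) := by
  intro j
  induction j with
  | zero => rw [ch_two]; norm_num; linarith
  | succ j ih =>
    have hbase := ch_base k (by linarith) (j+1)
    have h0 : 0 ≤ ch k (j+1) := hbase.1
    have h1 : ch k (j+1) ≤ ch k (j+2) := hbase.2
    have h2 : 0 ≤ ch k (j+2) := le_trans h0 h1
    rw [ch_succ]
    have h3 : 3 * ch k (j+2) ≤ k * ch k (j+2) := mul_le_mul_of_nonneg_right hk h2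
    have h4 : (2:ℤ)^(j+1+1) = 2 * 2^(j+1) := by ring
    linarith

lemma descent : ∀ a n : ℕ, ∀ k : ℤ, a < n →
    ((a:ℤ)^2 + (n:ℤ)^2 - 1 = (a:ℤ) * (n:ℤ) * k) →
    ∃ d, ch k d = (a:ℤ) ∧ ch k (d+1) = (n:ℤ) := by
  intro a
  induction a using Nat.strong_induction_on with
  | _ a ih =>
    intro n k han heq
    rcases Nat.eq_zero_or_pos a with ha | ha
    · subst ha
      have hn2 : (n:ℤ)^2 = 1 := by push_cast at heq; linarith
      have hfac : ((n:ℤ) - 1) * ((n:ℤ) + 1) = 0 := by linear_combination hn2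
      have hn0 : (0:ℤ) ≤ (n:ℤ) := Int.natCast_nonneg n
      have hn1 : (n:ℤ) = 1 := by
        rcases mul_eq_zero.mp hfac with h | h
        · linarith
        · linarith
      have : n = 1 := by exact_mod_cast hn1
      subst this
      exact ⟨0, by simp [ch_zero, ch_one]⟩
    · have ha1 : (1:ℤ) ≤ (a:ℤ) := by exact_mod_cast ha
      have han' : (a:ℤ) < (n:ℤ) := by exact_mod_cast han
      have hnpos : (0:ℤ) < (n:ℤ) := by linarith
      set α : ℤ := (a:ℤ) * k - (n:ℤ) with hα
      have hαn : α * (n:ℤ) = (a:ℤ)^2 - 1 := by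
        rw [hα]; linear_combination -heq
      have ha2 : (0:ℤ) ≤ (a:ℤ)^2 - 1 := by nlinarith
      have hα0 : 0 ≤ α := by
        by_contra h
        push_neg at h
        nlinarith
      have hαa : α < (a:ℤ) := by nlinarith
      have htn : ((α.toNat : ℤ)) = α := Int.toNat_of_nonneg hα0
      have hA'a : α.toNat < a := by
        have : (α.toNat : ℤ) < (a:ℤ) := by rw [htn]; exact hαa
        exact_mod_cast this
      have heq2 : ((α.toNat:ℤ))^2 + (a:ℤ)^2 - 1 = (α.toNat:ℤ) * (a:ℤ) * k := by
        rw [htn]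
        have h5 : α * α = α * ((a:ℤ)*k - (n:ℤ)) := by rw [← hα]
        linear_combination h5 - hαn
      obtain ⟨d, hd1, hd2⟩ := ih α.toNat hA'a a k hA'a heq2
      refine ⟨d+1, hd2, ?_⟩
      rw [ch_succ, hd2, hd1, htn, hα]
      ring

lemma exists_k (n : ℕ) (a : ℕ) (ha : a ∈ A n) (hn : 2 < n) (hne : a ≠ n - 1) :
    ∃ k : ℤ, 3 ≤ k ∧ (a:ℤ)^2 + (n:ℤ)^2 - 1 = (a:ℤ) * (n:ℤ) * k := by
  have hmem := ha
  simp only [A, Finset.mem_filter, Finset.mem_Ico] at hmem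
  obtain ⟨⟨ha1, han⟩, hd1, hd2⟩ := hmem
  have ha1' : (1:ℤ) ≤ (a:ℤ) := by exact_mod_cast ha1
  have han' : (a:ℤ) < (n:ℤ) := by exact_mod_cast han
  -- coprimality
  have hcop : IsCoprime (a:ℤ) (n:ℤ) := by
    rw [Int.isCoprime_iff_gcd_eq_one]
    have g1 : (Int.gcd (a:ℤ) (n:ℤ) : ℤ) ∣ (a:ℤ) := Int.gcd_dvd_left _ _
    have g2 : (Int.gcd (a:ℤ) (n:ℤ) : ℤ) ∣ (n:ℤ) := Int.gcd_dvd_right _ _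
    have g3 : (Int.gcd (a:ℤ) (n:ℤ) : ℤ) ∣ (a:ℤ)^2 - 1 := g2.trans hd1
    have g4 : (Int.gcd (a:ℤ) (n:ℤ) : ℤ) ∣ (a:ℤ)^2 := by
      have := g1.mul_left (a:ℤ)
      simpa [sq] using this
    have g5 : (Int.gcd (a:ℤ) (n:ℤ) : ℤ) ∣ 1 := by
      have := dvd_sub g4 g3
      simpa using this
    have := Int.eq_one_of_dvd_one (by positivity) g5
    exact_mod_cast this
  have hdvd : (a:ℤ) * (n:ℤ) ∣ (a:ℤ)^2 + (n:ℤ)^2 - 1 := by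
    apply hcop.mul_dvd
    · have : (a:ℤ) ∣ (a:ℤ)^2 := dvd_pow_self _ (by norm_num)
      have h := dvd_add this hd2
      have e : (a:ℤ)^2 + ((n:ℤ)^2 - 1) = (a:ℤ)^2 + (n:ℤ)^2 - 1 := by ring
      rwa [e] at h
    · have : (n:ℤ) ∣ (n:ℤ)^2 := dvd_pow_self _ (by norm_num)
      have h := dvd_add hd1 this
      have e : ((a:ℤ)^2 - 1) + (n:ℤ)^2 = (a:ℤ)^2 + (n:ℤ)^2 - 1 := by ring
      rwa [e] at h
  obtain ⟨k, hk⟩ := hdvd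
  have hank : (a:ℤ)^2 + (n:ℤ)^2 - 1 = (a:ℤ) * (n:ℤ) * k := hk
  have hanpos : (0:ℤ) < (a:ℤ) * (n:ℤ) := by positivity
  have hk2 : 2 ≤ k := by
    by_contra h
    push_neg at h
    have hk1 : k ≤ 1 := by linarith
    have : (a:ℤ) * (n:ℤ) * k ≤ (a:ℤ) * (n:ℤ) * 1 := by
      apply mul_le_mul_of_nonneg_left hk1 (le_of_lt hanpos)
    nlinarith [sq_nonneg ((n:ℤ) - (a:ℤ) - 1)]
  have hk3 : k ≠ 2 := by
    intro h
    subst h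
    have hsq : ((n:ℤ) - (a:ℤ))^2 = 1 := by linear_combination hank
    have hna : (n:ℤ) - (a:ℤ) = 1 := by nlinarith
    apply hne
    have : (a:ℤ) = (n:ℤ) - 1 := by linarith
    have hn1 : 1 ≤ n := by omega
    omega
  exact ⟨k, by omega, hank⟩

lemma card_A_le (n : ℕ) (hn : 2 < n) : (A n).card ≤ Nat.log 2 n + 1 := by
  classical
  set L := Nat.log 2 n with hL
  -- the depth function
  set P : ℕ → ℕ → Prop := fun a d =>
    0 < d ∧ ∃ k : ℤ, 3 ≤ k ∧ ch k d = (a:ℤ) ∧ ch k (d+1) = (n:ℤ) with hP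
  set f : ℕ → ℕ := fun a => if a = n - 1 then 0 else (if h : ∃ d, P a d then Nat.find h else 0)
    with hf
  -- members other than n-1 satisfy the existence
  have hex : ∀ a ∈ A n, a ≠ n - 1 → ∃ d, P a d := by
    intro a ha hne
    obtain ⟨k, hk3, hank⟩ := exists_k n a ha hn hne
    have hmem := ha
    simp only [A, Finset.mem_filter, Finset.mem_Ico] at hmem
    obtain ⟨⟨ha1, han⟩, -⟩ := hmem
    obtain ⟨d, hd1, hd2⟩ := descent a n k han hank
    refine ⟨d, ?_, k, hk3, hd1, hd2⟩
    rcases Nat.eq_zero_or_pos d with h | h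
    · exfalso
      subst h
      rw [ch_zero] at hd1
      have : a = 0 := by exact_mod_cast hd1.symm
      omega
    · exact h
  -- f is bounded by L on members
  have hbound : ∀ a ∈ A n, f a < L + 1 := by
    intro a ha
    rw [hf]
    by_cases hne : a = n - 1
    · simp [hne]
    · simp only [hne, if_false]
      have h := hex a ha hne
      rw [dif_pos h]
      obtain ⟨hd0, k, hk3, hd1, hd2⟩ := Nat.find_spec h
      obtain ⟨j, hj⟩ : ∃ j, Nat.find h = j + 1 := ⟨Nat.find h - 1, by omega⟩
      rw [hj] at hd2 ⊢
      have hgr := ch_growth k hk3 j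
      rw [hd2] at hgr
      have h2d : (2:ℤ)^(j+1) < (n:ℤ) := hgr
      have h2d' : 2^(j+1) < n := by exact_mod_cast h2d
      have hlt : 2^(j+1) < 2^(L+1) :=
        lt_of_lt_of_le h2d' (le_of_lt (Nat.lt_pow_succ_log_self (by norm_num) n))
      exact Nat.pow_lt_pow_iff_right (by norm_num) |>.mp hlt
  -- f is injective on members
  have hinj : Set.InjOn f (A n : Set ℕ) := by
    intro a ha b hb hab
    simp only [Finset.coe_mem, Finset.mem_coe] at ha hb
    by_cases hA : a = n - 1 <;> by_cases hB : b = n - 1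
    · rw [hA, hB]
    · exfalso
      have hBe := hex b hb hB
      rw [hf] at hab
      simp only [hA, if_true, hB, if_false, dif_pos hBe] at hab
      have := (Nat.find_spec hBe).1
      omega
    · exfalso
      have hAe := hex a ha hA
      rw [hf] at hab
      simp only [hA, if_false, hB, if_true, dif_pos hAe] at hab
      have := (Nat.find_spec hAe).1
      omega
    · have hAe := hex a ha hA
      have hBe := hex b hb hB
      rw [hf] at hab
      simp only [hA, hB, if_false, dif_pos hAe, dif_pos hBe] at hab
      obtain ⟨hd0a, ka, hka3, hda1, hda2⟩ := Nat.find_spec hAe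
      obtain ⟨hd0b, kb, hkb3, hdb1, hdb2⟩ := Nat.find_spec hBe
      rw [hab] at hda1 hda2 hd0a
      obtain ⟨j, hj⟩ : ∃ j, Nat.find hBe = j + 1 := ⟨Nat.find hBe - 1, by omega⟩
      rw [hj] at hda1 hda2 hdb1 hdb2
      have hkk : ka = kb := by
        rcases lt_trichotomy ka kb with h | h | h
        · exfalso
          have := ch_strict ka kb (by linarith) h j
          rw [hda2, hdb2] at this
          exact lt_irrefl _ this
        · exact h
        · exfalso
          have := ch_strict kb ka (by linarith) h j
          rw [hda2, hdb2] at this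
          exact lt_irrefl _ this
      rw [hkk, hdb1] at hda1
      exact_mod_cast hda1.symm
  have := Finset.card_le_card_of_injOn f (fun a ha => Finset.mem_range.mpr (hbound a ha)) hinj
  simpa using this

end Stmt15Aux

theorem stmt_15 (n : ℕ) (hn : 2 < n) :
    ((A n).card : ℝ) < Real.logb 2 (n : ℝ) + 2 := by
  have h1 := Stmt15Aux.card_A_le n hn
  have hn0 : (0:ℝ) < (n:ℝ) := by positivity
  set L := Nat.log 2 n with hL
  have hpow : (2:ℕ)^L ≤ n := Nat.pow_log_le_self 2 (by omega)
  have hpow' : (2:ℝ)^L ≤ (n:ℝ) := by exact_mod_cast hpow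
  have hlog : Real.log ((2:ℝ)^L) ≤ Real.log (n:ℝ) :=
    Real.log_le_log (by positivity) hpow'
  rw [Real.log_pow] at hlog
  have hlog2 : (0:ℝ) < Real.log 2 := Real.log_pos (by norm_num)
  have hLlogb : (L:ℝ) ≤ Real.logb 2 (n:ℝ) := by
    rw [Real.logb, le_div_iff₀ hlog2]
    exact hlog
  have h1' : ((A n).card : ℝ) ≤ (L:ℝ) + 1 := by exact_mod_cast h1
  linarith
end

section
/- For every real x > 3, the number T_x of integers n with 1 < n ≤ x and |𝒜(n)| ≥ 3 satisfies T_x < (√(x+1) − 2) · log₂ x. -/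
/-- The Vieta chain for parameter `c`. -/
def s (c : ℤ) : ℕ → ℤ
  | 0 => 1
  | 1 => c
  | (j+2) => c * s c (j+1) - s c j

lemma s_basic (c : ℤ) (hc : 3 ≤ c) : ∀ m, 1 ≤ s c m ∧ 2 * s c m ≤ s c (m+1) := by
  intro m
  induction m with
  | zero => constructor <;> simp [s] <;> omega
  | succ k ih =>
    obtain ⟨h1, h2⟩ := ih
    have h3 : 1 ≤ s c (k+1) := by nlinarith
    refine ⟨h3, ?_⟩
    show 2 * s c (k+1) ≤ c * s c (k+1) - s c k
    nlinarith

lemma s_pow (c : ℤ) (hc : 3 ≤ c) : ∀ m, (2:ℤ)^m ≤ s c m := by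
  intro m
  induction m with
  | zero => simp [s]
  | succ k ih =>
    have := s_basic c hc k
    calc (2:ℤ)^(k+1) = 2 * 2^k := by ring
    _ ≤ 2 * s c k := by linarith
    _ ≤ s c (k+1) := this.2

lemma s_mono (c : ℤ) (hc : 3 ≤ c) : Monotone (s c) := by
  apply monotone_nat_of_le_succ
  intro m
  have := s_basic c hc m
  linarith [this.1, this.2]

lemma descent_s18 (c : ℤ) (hc : 3 ≤ c) :
    ∀ (N : ℕ) (a n : ℤ), n.toNat ≤ N → 1 ≤ a → a < n →
      a^2 + n^2 - 1 = c * a * n → ∃ j : ℕ, a = s c j ∧ n = s c (j+1) := by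
  intro N
  induction N with
  | zero => intro a n hN h1 h2 _; omega
  | succ N ih =>
    intro a n hN h1 han heq
    by_cases ha : a = 1
    · subst ha
      have hn : 0 < n := by omega
      have : n = c := by
        have h : n * n = c * n := by ring_nf; ring_nf at heq; linarith
        exact mul_right_cancel₀ (by omega) h
      exact ⟨0, by simp [s], by simp [s, this]⟩
    · have ha2 : 2 ≤ a := by omega
      set b : ℤ := c * a - n with hb
      have hbn : b * n = a^2 - 1 := by rw [hb]; nlinarith
      have hb1 : 1 ≤ b := by nlinarith
      have hba : b < a := by
        have h : b * n < a * n := by nlinarith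
        exact lt_of_mul_lt_mul_right h (by omega)
      have heq2 : b^2 + a^2 - 1 = c * b * a := by rw [hb]; nlinarith
      obtain ⟨j, hj1, hj2⟩ := ih b a (by omega) hb1 hba heq2
      refine ⟨j+1, hj2, ?_⟩
      show n = c * s c (j+1) - s c j
      rw [← hj1, ← hj2]; omega

lemma extraction (n : ℕ) (hn : 1 < n) (hcard : 3 ≤ (A n).card) :
    ∃ (c : ℤ) (m : ℕ), 3 ≤ c ∧ 2 ≤ m ∧ (n : ℤ) = s c m := by
  -- find a nontrivial element of A n
  have hBcard : 1 ≤ (((A n).erase 1).erase (n-1)).card := by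
    have h1 : (A n).card - 2 ≤ (((A n).erase 1).erase (n-1)).card := by
      have := Finset.pred_card_le_card_erase (a := 1) (s := A n)
      have := Finset.pred_card_le_card_erase (a := n-1) (s := (A n).erase 1)
      omega
    omega
  obtain ⟨a, haB⟩ := Finset.card_pos.mp (show 0 < (((A n).erase 1).erase (n-1)).card by omega)
  have ha1 : a ≠ n - 1 := (Finset.mem_erase.mp haB).1
  have haB2 := (Finset.mem_erase.mp haB).2
  have ha2 : a ≠ 1 := (Finset.mem_erase.mp haB2).1
  have haA : a ∈ A n := (Finset.mem_erase.mp haB2).2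
  rw [A, Finset.mem_filter, Finset.mem_Ico] at haA
  obtain ⟨⟨hage, haltn⟩, hd1, hd2⟩ := haA
  have ha2' : 2 ≤ a := by omega
  have han2 : a + 2 ≤ n := by omega
  -- integer setup
  set A' : ℤ := (a : ℤ) with hA'
  set N' : ℤ := (n : ℤ) with hN'
  have hA2 : 2 ≤ A' := by rw [hA']; exact_mod_cast ha2'
  have hN2 : A' + 2 ≤ N' := by rw [hA', hN']; exact_mod_cast han2
  -- coprimality
  obtain ⟨t, ht⟩ := hd1
  have hcop : IsCoprime N' A' := ⟨-t, A', by linarith [ht]⟩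
  have hdvd1 : N' ∣ A'^2 + N'^2 - 1 := ⟨t + N', by linarith [ht]⟩
  have hdvd2 : A' ∣ A'^2 + N'^2 - 1 := by
    obtain ⟨v, hv⟩ := hd2
    exact ⟨A' + v, by linarith [hv]⟩
  obtain ⟨k, hk⟩ := (IsCoprime.mul_dvd hcop hdvd1 hdvd2 : N' * A' ∣ A'^2 + N'^2 - 1)
  have heq : A'^2 + N'^2 - 1 = k * A' * N' := by linarith [hk]
  have hk3 : 3 ≤ k := by
    by_contra hcon
    have hd : 0 ≤ (N' - A') * (N' - A' - 2) := mul_nonneg (by linarith) (by linarith)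
    have hAN : 0 < A' * N' := mul_pos (by linarith) (by linarith)
    have h2 : 0 ≤ (2 - k) * (A' * N') := mul_nonneg (by omega) (le_of_lt hAN)
    nlinarith [hd, h2, heq]
  obtain ⟨j, hj1, hj2⟩ := descent_s18 k hk3 N'.toNat A' N' le_rfl (by omega) (by omega) heq
  have hj0 : j ≠ 0 := by
    intro h; rw [h] at hj1; simp [s] at hj1; omega
  exact ⟨k, j + 1, hk3, by omega, hj2⟩

theorem stmt_18 (x : ℝ) (hx : 3 < x) :
    ({n : ℕ | 1 < n ∧ (n : ℝ) ≤ x ∧ 3 ≤ (A n).card}.ncard : ℝ) <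
      (Real.sqrt (x + 1) - 2) * Real.logb 2 x := by
  set S := {n : ℕ | 1 < n ∧ (n : ℝ) ≤ x ∧ 3 ≤ (A n).card} with hS
  have hsqrt : 2 < Real.sqrt (x + 1) := by
    have h4 : Real.sqrt 4 < Real.sqrt (x + 1) :=
      Real.sqrt_lt_sqrt (by norm_num) (by linarith)
    have : Real.sqrt 4 = 2 := by
      rw [show (4:ℝ) = 2^2 by norm_num, Real.sqrt_sq (by norm_num)]
    linarith
  have hlogb : 0 < Real.logb 2 x := Real.logb_pos (by norm_num) (by linarith)
  set C : ℤ := ⌊Real.sqrt (x + 1)⌋ with hC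
  set M : ℕ := ⌊Real.logb 2 x⌋₊ with hM
  set F : Finset ℕ :=
    ((Finset.Icc (3:ℤ) C) ×ˢ (Finset.Icc (2:ℕ) M)).image (fun p => (s p.1 p.2).toNat)
    with hF
  have key : ∀ n ∈ S, ∃ c m, 3 ≤ c ∧ c ≤ C ∧ 2 ≤ m ∧ m ≤ M ∧ (n:ℤ) = s c m := by
    intro n hn
    obtain ⟨hn1, hnx, hncard⟩ := hn
    obtain ⟨c, m, hc3, hm2, hnsm⟩ := extraction n hn1 hncard
    have hmono := s_mono c hc3
    have hs2 : s c 2 = c * c - 1 := by show c * s c 1 - s c 0 = _; simp [s]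
    have hcn : c * c ≤ (n:ℤ) + 1 := by
      have := hmono (show 2 ≤ m from hm2)
      rw [hs2, ← hnsm] at this; omega
    have hcC : c ≤ C := by
      rw [hC]
      apply Int.le_floor.mpr
      have hcx : (c:ℝ) * (c:ℝ) ≤ x + 1 := by
        have h1 : ((c * c : ℤ) : ℝ) ≤ ((n:ℤ):ℝ) + 1 := by exact_mod_cast hcn
        push_cast at h1 ⊢
        linarith
      have hc0 : (0:ℝ) < (c:ℝ) := by exact_mod_cast (by omega : (0:ℤ) < c)
      have := (Real.le_sqrt' hc0 (y := x + 1)).mpr (by nlinarith)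
      exact this
    have hmM : m ≤ M := by
      rw [hM]
      apply Nat.le_floor
      have h2m : (2:ℤ)^m ≤ (n:ℤ) := by rw [hnsm]; exact s_pow c hc3 m
      have h2mr : (2:ℝ)^m ≤ x := by
        have : ((2^m : ℤ) : ℝ) ≤ ((n:ℤ):ℝ) := by exact_mod_cast h2m
        push_cast at this
        linarith
      have : Real.logb 2 ((2:ℝ)^m) ≤ Real.logb 2 x :=
        Real.logb_le_logb_of_le (by norm_num) (by positivity) h2mr
      rwa [Real.logb_pow, Real.logb_self_eq_one (by norm_num), mul_one] at this
    exact ⟨c, m, hc3, hcC, hm2, hmM, hnsm⟩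
  have hsub : S ⊆ ↑F := by
    intro n hn
    obtain ⟨c, m, hc3, hcC, hm2, hmM, hnsm⟩ := key n hn
    simp only [hF, Finset.coe_image, Set.mem_image, Finset.mem_coe,
      Finset.mem_product, Finset.mem_Icc]
    exact ⟨(c, m), ⟨⟨hc3, hcC⟩, hm2, hmM⟩, by rw [← hnsm]; simp⟩
  have hfin : S.Finite := Set.Finite.subset F.finite_toSet hsub
  have hle : S.ncard ≤ F.card := by
    have := Set.ncard_le_ncard hsub F.finite_toSet
    rwa [Set.ncard_coe_finset] at this
  have hFcard : F.card ≤ (C - 2).toNat * (M - 1) := by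
    calc F.card ≤ ((Finset.Icc (3:ℤ) C) ×ˢ (Finset.Icc (2:ℕ) M)).card :=
          Finset.card_image_le
    _ = (Finset.Icc (3:ℤ) C).card * (Finset.Icc (2:ℕ) M).card := Finset.card_product _ _
    _ = (C + 1 - 3).toNat * (M + 1 - 2) := by rw [Int.card_Icc, Nat.card_Icc]
    _ = (C - 2).toNat * (M - 1) := by congr 1; omega
  rcases Set.eq_empty_or_nonempty S with hemp | ⟨n, hnS⟩
  · rw [hemp]
    simp only [Set.ncard_empty, Nat.cast_zero]
    have : 0 < Real.sqrt (x + 1) - 2 := by linarith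
    positivity
  · obtain ⟨c, m, hc3, hcC, hm2, hmM, _⟩ := key n hnS
    have hC3 : 3 ≤ C := le_trans hc3 hcC
    have hM2 : 2 ≤ M := le_trans hm2 hmM
    have hCr : ((C - 2).toNat : ℝ) ≤ Real.sqrt (x + 1) - 2 := by
      have h1 : ((C - 2).toNat : ℝ) = ((C:ℝ) - 2) := by
        rw [show ((C - 2).toNat : ℝ) = (((C - 2).toNat : ℤ) : ℝ) by push_cast; ring]
        rw [Int.toNat_of_nonneg (by omega)]
        push_cast; ring
      have h2 : (C : ℝ) ≤ Real.sqrt (x + 1) := Int.floor_le _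
      linarith
    have hMr : ((M - 1 : ℕ) : ℝ) < Real.logb 2 x := by
      have h1 : ((M - 1 : ℕ) : ℝ) = (M : ℝ) - 1 := by
        have : (1:ℕ) ≤ M := by omega
        push_cast [Nat.cast_sub this]; ring
      have h2 : (M : ℝ) ≤ Real.logb 2 x := Nat.floor_le (le_of_lt hlogb)
      linarith
    calc (S.ncard : ℝ) ≤ ((C - 2).toNat * (M - 1) : ℕ) := by exact_mod_cast le_trans hle hFcard
    _ = ((C - 2).toNat : ℝ) * ((M - 1 : ℕ) : ℝ) := by push_cast; ring
    _ < (Real.sqrt (x + 1) - 2) * Real.logb 2 x := by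
        apply mul_lt_mul' hCr hMr (by positivity) (by linarith)
end

section
/- The average value of |𝒜(n)| tends to 2: lim_{x→∞} (1/x) Σ_{n=2}^{⌊x⌋} |𝒜(n)| = 2. Moreover, for every real x ≥ 2 one has Σ_{n=2}^{⌊x⌋} |𝒜(n)| ≤ 2x + √(x+1) · (log₂ x)². -/
def upF (p : ℕ × ℕ) : ℕ × ℕ := (p.2, (p.2 * p.2 - 1) / p.1)

def J (p : ℕ × ℕ) : Prop :=
  1 ≤ p.1 ∧ p.1 + 2 ≤ p.2 ∧ ((p.2:ℤ) ∣ (p.1:ℤ)^2 - 1) ∧ ((p.1:ℤ) ∣ (p.2:ℤ)^2 - 1)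

lemma key : ∀ u : ℕ, ∀ w : ℕ, J (u, w) → ∃ j v, 3 ≤ v ∧ upF^[j] (1, v) = (u, w) ∧
    (1 ≤ j → v*v ≤ w + 1 ∧ 2*u + 2 ≤ w ∧ 2^(j+2) ≤ w) := by
  intro u
  induction u using Nat.strong_induction_on with
  | _ u IH =>
  intro w hJ
  obtain ⟨hu1, huw, hdvd1, hdvd2⟩ := hJ
  simp only at hu1 huw hdvd1 hdvd2
  rcases eq_or_lt_of_le hu1 with h1 | h2
  · exact ⟨0, w, by omega, by simp [← h1], by omega⟩
  · -- 2 ≤ u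
    have hu2 : 2 ≤ u := h2
    set m : ℕ := u * u - 1 with hm_def
    have hm : m + 1 = u * u := by
      have : 1 ≤ u * u := Nat.one_le_iff_ne_zero.mpr (by positivity)
      omega
    have hmz : (m : ℤ) = (u:ℤ)^2 - 1 := by
      have h : ((m:ℕ):ℤ) + 1 = (u:ℤ) * (u:ℤ) := by exact_mod_cast hm
      rw [sq]; linarith
    have hwd : w ∣ m := by
      have : (w:ℤ) ∣ (m:ℤ) := by rw [hmz]; exact hdvd1
      exact_mod_cast this
    set k : ℕ := m / w with hk_def
    have hk : k * w = m := Nat.div_mul_cancel hwd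
    have hmpos : 0 < m := by nlinarith
    have hwpos : 0 < w := by omega
    have hk1 : 1 ≤ k := by
      rcases Nat.eq_zero_or_pos k with h | h
      · rw [h] at hk; simp at hk; omega
      · exact h
    have hkz : (k:ℤ) * (w:ℤ) = (u:ℤ)^2 - 1 := by
      rw [← hmz]; exact_mod_cast hk
    have hku : k + 2 ≤ u := by
      by_contra hcon
      push_neg at hcon
      have h1 : (u:ℤ) - 1 ≤ (k:ℤ) := by exact_mod_cast (by omega : u - 1 ≤ k)
      have h2 : (u:ℤ) + 2 ≤ (w:ℤ) := by exact_mod_cast huw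
      have h3 : (2:ℤ) ≤ (u:ℤ) := by exact_mod_cast hu2
      nlinarith
    -- J (k, u)
    have hdvdA : (u:ℤ) ∣ (k:ℤ)^2 - 1 := by
      have h1 : (u:ℤ) ∣ (k:ℤ)*(w:ℤ) + 1 := ⟨u, by linarith [hkz]⟩
      have h2 : (u:ℤ) ∣ ((k:ℤ)*(w:ℤ) - 1) * ((k:ℤ)*(w:ℤ) + 1) - (k:ℤ)^2 * ((w:ℤ)^2 - 1) := by
        have := (h1.mul_left ((k:ℤ)*(w:ℤ) - 1)).sub (hdvd2.mul_left ((k:ℤ)^2))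
        exact this
      have : ((k:ℤ)*(w:ℤ) - 1) * ((k:ℤ)*(w:ℤ) + 1) - (k:ℤ)^2 * ((w:ℤ)^2 - 1) = (k:ℤ)^2 - 1 := by ring
      rwa [this] at h2
    have hdvdB : (k:ℤ) ∣ (u:ℤ)^2 - 1 := ⟨w, by linarith [hkz]⟩
    have hJk : J (k, u) := ⟨hk1, hku, by simpa using hdvdA, by simpa using hdvdB⟩
    obtain ⟨j, v, h3v, hup, hgrow⟩ := IH k (by omega) u hJk
    have hupnext : upF^[j+1] (1, v) = (u, w) := by
      rw [Function.iterate_succ_apply', hup]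
      have : (u * u - 1) / k = w := by
        rw [show u * u - 1 = k * w by omega, Nat.mul_div_cancel_left _ hk1]
      simp [upF, this]
    refine ⟨j + 1, v, h3v, hupnext, fun _ => ?_⟩
    rcases Nat.eq_zero_or_pos j with hj0 | hj1
    · -- j = 0 : (1, v) = (k, u)
      rw [hj0] at hup
      simp only [Function.iterate_zero, id_eq, Prod.mk.injEq] at hup
      have hkv : k = 1 := hup.1.symm
      have hvu : v = u := hup.2
      have hw : w + 1 = u * u := by
        rw [hkv] at hk; omega
      have hu3 : 3 ≤ u := by omega
      refine ⟨by nlinarith, by nlinarith, ?_⟩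
      rw [hj0]
      norm_num
      nlinarith
    · obtain ⟨hv2, hk2, hpow⟩ := hgrow hj1
      have h2u2w : 2*u + 2 ≤ w := by
        have h1 : (2*(u:ℤ) + 2) * (k:ℤ) ≤ (w:ℤ) * (k:ℤ) := by
          have hkk : (2:ℤ)*(k:ℤ) + 2 ≤ (u:ℤ) := by exact_mod_cast hk2
          have hkpos : (1:ℤ) ≤ (k:ℤ) := by exact_mod_cast hk1
          nlinarith
        have hkpos : (0:ℤ) < (k:ℤ) := by exact_mod_cast hk1
        have := le_of_mul_le_mul_right h1 hkpos
        exact_mod_cast this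
      refine ⟨by omega, h2u2w, ?_⟩
      have : 2^(j+1+2) = 2 * 2^(j+2) := by ring
      omega

def ex (n : ℕ) : Finset ℕ :=
  (Finset.Ico 2 (n-1)).filter (fun a => (n : ℤ) ∣ (a : ℤ) ^ 2 - 1 ∧ (a : ℤ) ∣ (n : ℤ) ^ 2 - 1)

lemma card_A_le (n : ℕ) : (A n).card ≤ 2 + (ex n).card := by
  have hsub : A n ⊆ insert 1 (insert (n-1) (ex n)) := by
    intro a ha
    simp only [A, Finset.mem_filter, Finset.mem_Ico] at ha
    obtain ⟨⟨h1, h2⟩, hc⟩ := ha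
    simp only [Finset.mem_insert]
    by_cases e1 : a = 1
    · exact Or.inl e1
    by_cases e2 : a = n - 1
    · exact Or.inr (Or.inl e2)
    refine Or.inr (Or.inr ?_)
    simp only [ex, Finset.mem_filter, Finset.mem_Ico]
    exact ⟨⟨by omega, by omega⟩, hc⟩
  calc (A n).card ≤ (insert 1 (insert (n-1) (ex n))).card := Finset.card_le_card hsub
    _ ≤ (insert (n-1) (ex n)).card + 1 := Finset.card_insert_le _ _
    _ ≤ (ex n).card + 1 + 1 := by
        have := Finset.card_insert_le (n-1) (ex n); omega
    _ = 2 + (ex n).card := by omega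

def PP (N : ℕ) : Finset (ℕ × ℕ) :=
  (Finset.Icc 2 N).biUnion (fun n => (ex n).image (fun a => (a, n)))

lemma sum_ex (N : ℕ) : ∑ n ∈ Finset.Icc 2 N, (ex n).card = (PP N).card := by
  rw [PP, Finset.card_biUnion]
  · refine Finset.sum_congr rfl fun n _ => ?_
    rw [Finset.card_image_of_injective]
    intro a b hab
    simpa using hab
  · intro n hn m hm hnm
    simp only [Finset.disjoint_left, Finset.mem_image]
    rintro p ⟨a, _, rfl⟩ ⟨b, _, hb⟩
    have h2 := congrArg Prod.snd hb
    simp only at h2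
    exact hnm h2.symm

lemma PP_subset (N : ℕ) : PP N ⊆
    (Finset.Icc 1 (Nat.log 2 N) ×ˢ Finset.Icc 3 (Nat.sqrt (N+1))).image
      (fun q : ℕ × ℕ => upF^[q.1] (1, q.2)) := by
  intro p hp
  simp only [PP, Finset.mem_biUnion, Finset.mem_image, Finset.mem_Icc] at hp
  obtain ⟨n, ⟨hn2, hnN⟩, a, ha, rfl⟩ := hp
  simp only [ex, Finset.mem_filter, Finset.mem_Ico] at ha
  obtain ⟨⟨ha2, han⟩, hc1, hc2⟩ := ha
  have hJ : J (a, n) := ⟨by omega, by omega, hc1, hc2⟩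
  obtain ⟨j, v, h3v, hup, hgrow⟩ := key a n hJ
  have hj1 : 1 ≤ j := by
    rcases Nat.eq_zero_or_pos j with h | h
    · rw [h] at hup; simp at hup; omega
    · exact h
  obtain ⟨hv2, _, hpow⟩ := hgrow hj1
  simp only [Finset.mem_image, Finset.mem_product, Finset.mem_Icc]
  refine ⟨(j, v), ⟨⟨hj1, ?_⟩, h3v, ?_⟩, hup⟩
  · rw [Nat.le_log_iff_pow_le (by norm_num) (by omega)]
    calc 2^j ≤ 2^(j+2) := Nat.pow_le_pow_right (by norm_num) (by omega)
      _ ≤ n := hpow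
      _ ≤ N := hnN
  · rw [Nat.le_sqrt]
    show v * v ≤ N + 1
    omega

lemma nat_upper (N : ℕ) : ∑ n ∈ Finset.Icc 2 N, (A n).card ≤
    2 * (N - 1) + Nat.log 2 N * Nat.sqrt (N + 1) := by
  calc ∑ n ∈ Finset.Icc 2 N, (A n).card
      ≤ ∑ n ∈ Finset.Icc 2 N, (2 + (ex n).card) :=
        Finset.sum_le_sum fun n _ => card_A_le n
    _ = 2 * (N - 1) + ∑ n ∈ Finset.Icc 2 N, (ex n).card := by
        rw [Finset.sum_add_distrib, Finset.sum_const, Nat.card_Icc, smul_eq_mul]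
        congr 1
        omega
    _ ≤ 2 * (N - 1) + Nat.log 2 N * Nat.sqrt (N + 1) := by
        rw [sum_ex]
        have h1 := Finset.card_le_card (PP_subset N)
        have h2 := Finset.card_image_le (s := Finset.Icc 1 (Nat.log 2 N) ×ˢ Finset.Icc 3 (Nat.sqrt (N+1)))
          (f := fun q : ℕ × ℕ => upF^[q.1] (1, q.2))
        have h3 : (Finset.Icc 1 (Nat.log 2 N) ×ˢ Finset.Icc 3 (Nat.sqrt (N+1))).card
            ≤ Nat.log 2 N * Nat.sqrt (N+1) := by
          rw [Finset.card_product, Nat.card_Icc, Nat.card_Icc]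
          exact Nat.mul_le_mul (by omega) (by omega)
        omega

open Real Filter


lemma real_upper (x : ℝ) (hx : 2 ≤ x) :
    ∑ n ∈ Finset.Icc 2 ⌊x⌋₊, ((A n).card : ℝ) ≤
      2 * x + Real.sqrt (x + 1) * (Real.logb 2 x) ^ 2 := by
  set N := ⌊x⌋₊ with hN
  have hx0 : (0:ℝ) ≤ x := by linarith
  have hN2 : 2 ≤ N := Nat.le_floor (by exact_mod_cast hx)
  have hNx : (N : ℝ) ≤ x := Nat.floor_le hx0
  have hlogb1 : 1 ≤ Real.logb 2 x := by
    rw [show (1:ℝ) = Real.logb 2 2 by simp]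
    exact Real.logb_le_logb_of_le (by norm_num) (by norm_num) hx
  have hlog_le : (Nat.log 2 N : ℝ) ≤ Real.logb 2 x := by
    have h1 : ((2 ^ Nat.log 2 N : ℕ) : ℝ) ≤ x :=
      le_trans (by exact_mod_cast Nat.pow_log_le_self 2 (by omega)) hNx
    rw [Real.le_logb_iff_rpow_le (by norm_num) (by linarith), Real.rpow_natCast]
    exact_mod_cast h1
  have hsqrt_le : (Nat.sqrt (N + 1) : ℝ) ≤ Real.sqrt (x + 1) := by
    rw [show ((Nat.sqrt (N+1) : ℕ) : ℝ) = Real.sqrt (((Nat.sqrt (N+1) : ℕ):ℝ)^2) by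
      rw [Real.sqrt_sq (by positivity)]]
    apply Real.sqrt_le_sqrt
    have h1 : (Nat.sqrt (N+1)) * (Nat.sqrt (N+1)) ≤ N + 1 := Nat.sqrt_le (N+1)
    have h2 : ((Nat.sqrt (N+1) : ℕ) : ℝ)^2 ≤ ((N:ℝ) + 1) := by
      rw [sq]; exact_mod_cast h1
    linarith
  have hmain := nat_upper N
  have hcast : (∑ n ∈ Finset.Icc 2 N, ((A n).card : ℝ)) =
      ((∑ n ∈ Finset.Icc 2 N, (A n).card : ℕ) : ℝ) := by push_cast; ring
  rw [hcast]
  have h1 : ((∑ n ∈ Finset.Icc 2 N, (A n).card : ℕ) : ℝ) ≤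
      2 * ((N:ℝ) - 1) + (Nat.log 2 N : ℝ) * (Nat.sqrt (N+1) : ℝ) := by
    have hc : ((2 * (N - 1) + Nat.log 2 N * Nat.sqrt (N + 1) : ℕ) : ℝ) =
        2 * ((N:ℝ) - 1) + (Nat.log 2 N : ℝ) * (Nat.sqrt (N+1) : ℝ) := by
      push_cast [Nat.cast_sub (by omega : 1 ≤ N)]
      ring
    rw [← hc]
    exact_mod_cast hmain
  have h2 : (Nat.log 2 N : ℝ) * (Nat.sqrt (N+1) : ℝ) ≤
      Real.sqrt (x+1) * (Real.logb 2 x)^2 := by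
    have hs0 : (0:ℝ) ≤ (Nat.sqrt (N+1) : ℝ) := by positivity
    have hl0 : (0:ℝ) ≤ (Nat.log 2 N : ℝ) := by positivity
    calc (Nat.log 2 N : ℝ) * (Nat.sqrt (N+1) : ℝ)
        ≤ Real.logb 2 x * Real.sqrt (x+1) := by
          apply mul_le_mul hlog_le hsqrt_le hs0 (by linarith)
      _ ≤ Real.sqrt (x+1) * (Real.logb 2 x)^2 := by
          nlinarith [mul_nonneg (mul_nonneg (Real.sqrt_nonneg (x+1))
            (le_trans zero_le_one hlogb1)) (sub_nonneg.mpr hlogb1)]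
  linarith

-- lower bound
lemma two_le_card_A (n : ℕ) (hn : 3 ≤ n) : 2 ≤ (A n).card := by
  have hsub : ({1, n-1} : Finset ℕ) ⊆ A n := by
    intro a ha
    simp only [Finset.mem_insert, Finset.mem_singleton] at ha
    simp only [A, Finset.mem_filter, Finset.mem_Ico]
    rcases ha with rfl | rfl
    · exact ⟨⟨le_refl _, by omega⟩, by simp, by simp⟩
    · refine ⟨⟨by omega, by omega⟩, ?_, ?_⟩
      · have hcast : ((n - 1 : ℕ) : ℤ) = (n:ℤ) - 1 := by
          push_cast [Nat.cast_sub (by omega : 1 ≤ n)]; ring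
        rw [hcast]
        exact ⟨(n:ℤ) - 2, by ring⟩
      · have hcast : ((n - 1 : ℕ) : ℤ) = (n:ℤ) - 1 := by
          push_cast [Nat.cast_sub (by omega : 1 ≤ n)]; ring
        rw [hcast]
        exact ⟨(n:ℤ) + 1, by ring⟩
  have hcard : ({1, n-1} : Finset ℕ).card = 2 := by
    rw [Finset.card_insert_of_notMem (by simp; omega), Finset.card_singleton]
  rw [← hcard]
  exact Finset.card_le_card hsub

lemma nat_lower (N : ℕ) (hN : 3 ≤ N) :
    2 * (N - 2) ≤ ∑ n ∈ Finset.Icc 2 N, (A n).card := by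
  calc 2 * (N - 2) = ∑ n ∈ Finset.Icc 3 N, 2 := by
        rw [Finset.sum_const, Nat.card_Icc, smul_eq_mul]; ring_nf; omega
    _ ≤ ∑ n ∈ Finset.Icc 3 N, (A n).card :=
        Finset.sum_le_sum fun n hn => two_le_card_A n (Finset.mem_Icc.mp hn).1
    _ ≤ ∑ n ∈ Finset.Icc 2 N, (A n).card := by
        apply Finset.sum_le_sum_of_subset
        intro n hn
        simp only [Finset.mem_Icc] at *
        omega

lemma T0 : Tendsto (fun x : ℝ => Real.sqrt (x+1) * (Real.logb 2 x)^2 / x) atTop (nhds 0) := by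
  have hg : Tendsto (fun x : ℝ =>
      (Real.sqrt 2 / (Real.log 2)^2) * ((Real.log x) ^ ((2:ℕ):ℝ) / x ^ ((1:ℝ)/2))) atTop (nhds 0) := by
    have h := (isLittleO_log_rpow_rpow_atTop ((2:ℕ):ℝ)
      (by norm_num : (0:ℝ) < 1/2)).tendsto_div_nhds_zero
    simpa using h.const_mul (Real.sqrt 2 / (Real.log 2)^2)
  refine squeeze_zero' ?_ ?_ hg
  · filter_upwards [eventually_ge_atTop (2:ℝ)] with x hx
    have hx0 : (0:ℝ) < x := by linarith
    positivity
  · filter_upwards [eventually_ge_atTop (2:ℝ)] with x hx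
    have hx0 : (0:ℝ) ≤ x := by linarith
    have hxpos : (0:ℝ) < x := by linarith
    have hs : Real.sqrt (x+1) ≤ Real.sqrt 2 * Real.sqrt x := by
      rw [← Real.sqrt_mul (by norm_num)]
      apply Real.sqrt_le_sqrt
      linarith
    have key2 : Real.sqrt (x+1) / x ≤ Real.sqrt 2 / Real.sqrt x := by
      rw [div_le_div_iff₀ hxpos (Real.sqrt_pos.mpr hxpos)]
      calc Real.sqrt (x+1) * Real.sqrt x ≤ (Real.sqrt 2 * Real.sqrt x) * Real.sqrt x :=
            mul_le_mul_of_nonneg_right hs (Real.sqrt_nonneg x)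
        _ = Real.sqrt 2 * x := by rw [mul_assoc, Real.mul_self_sqrt hx0]
    have hrw1 : x ^ ((1:ℝ)/2) = Real.sqrt x := (Real.sqrt_eq_rpow x).symm
    have hrw2 : (Real.log x) ^ ((2:ℕ):ℝ) = (Real.log x)^(2:ℕ) := Real.rpow_natCast _ 2
    rw [hrw1, hrw2, Real.logb]
    calc Real.sqrt (x+1) * (Real.log x / Real.log 2)^2 / x
        = (Real.sqrt (x+1) / x) * ((Real.log x)^2 / (Real.log 2)^2) := by ring
      _ ≤ (Real.sqrt 2 / Real.sqrt x) * ((Real.log x)^2 / (Real.log 2)^2) := by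
          apply mul_le_mul_of_nonneg_right key2
          positivity
      _ = Real.sqrt 2 / (Real.log 2)^2 * ((Real.log x)^(2:ℕ) / Real.sqrt x) := by ring

lemma main_tendsto : Tendsto
    (fun x : ℝ => (1 / x) * ∑ n ∈ Finset.Icc 2 ⌊x⌋₊, ((A n).card : ℝ))
    atTop (nhds 2) := by
  have hg : Tendsto (fun x : ℝ => 2 - 6/x) atTop (nhds 2) := by
    have h6 : Tendsto (fun x : ℝ => 6/x) atTop (nhds 0) := by
      simpa [div_eq_mul_inv] using tendsto_inv_atTop_zero.const_mul (6:ℝ)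
    simpa using tendsto_const_nhds.sub h6
  have hh : Tendsto (fun x : ℝ => 2 + Real.sqrt (x+1) * (Real.logb 2 x)^2 / x)
      atTop (nhds 2) := by
    simpa using tendsto_const_nhds.add T0
  apply tendsto_of_tendsto_of_tendsto_of_le_of_le' hg hh
  · filter_upwards [eventually_ge_atTop (3:ℝ)] with x hx
    have hxpos : (0:ℝ) < x := by linarith
    have hN3 : 3 ≤ ⌊x⌋₊ := Nat.le_floor (by exact_mod_cast hx)
    have hlow := nat_lower ⌊x⌋₊ hN3
    have hcast : ((2 * (⌊x⌋₊ - 2) : ℕ) : ℝ) = 2 * ((⌊x⌋₊:ℝ) - 2) := by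
      push_cast [Nat.cast_sub (by omega : 2 ≤ ⌊x⌋₊)]
      ring
    have hS : 2 * ((⌊x⌋₊:ℝ) - 2) ≤ ∑ n ∈ Finset.Icc 2 ⌊x⌋₊, ((A n).card : ℝ) := by
      rw [← hcast]
      calc ((2 * (⌊x⌋₊ - 2) : ℕ) : ℝ) ≤ ((∑ n ∈ Finset.Icc 2 ⌊x⌋₊, (A n).card : ℕ) : ℝ) := by
            exact_mod_cast hlow
        _ = ∑ n ∈ Finset.Icc 2 ⌊x⌋₊, ((A n).card : ℝ) := by push_cast; ring
    have hfl : x - 1 ≤ (⌊x⌋₊:ℝ) := by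
      have := Nat.lt_floor_add_one x
      linarith
    have hS2 : 2*x - 6 ≤ ∑ n ∈ Finset.Icc 2 ⌊x⌋₊, ((A n).card : ℝ) := by linarith
    have h1 : (1/x) * (2*x - 6) = 2 - 6/x := by field_simp
    calc 2 - 6/x = (1/x) * (2*x - 6) := h1.symm
      _ ≤ (1/x) * ∑ n ∈ Finset.Icc 2 ⌊x⌋₊, ((A n).card : ℝ) := by
          apply mul_le_mul_of_nonneg_left hS2
          positivity
  · filter_upwards [eventually_ge_atTop (3:ℝ)] with x hx
    have hxpos : (0:ℝ) < x := by linarith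
    have hup := real_upper x (by linarith)
    calc (1/x) * ∑ n ∈ Finset.Icc 2 ⌊x⌋₊, ((A n).card : ℝ)
        ≤ (1/x) * (2 * x + Real.sqrt (x + 1) * (Real.logb 2 x) ^ 2) := by
          apply mul_le_mul_of_nonneg_left hup
          positivity
      _ = 2 + Real.sqrt (x+1) * (Real.logb 2 x)^2 / x := by field_simp

theorem stmt_19 :
    Filter.Tendsto
        (fun x : ℝ => (1 / x) * ∑ n ∈ Finset.Icc 2 ⌊x⌋₊, ((A n).card : ℝ))
        Filter.atTop (nhds 2) ∧
      ∀ x : ℝ, 2 ≤ x →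
        ∑ n ∈ Finset.Icc 2 ⌊x⌋₊, ((A n).card : ℝ) ≤
          2 * x + Real.sqrt (x + 1) * (Real.logb 2 x) ^ 2 := by
  exact ⟨main_tendsto, fun x hx => real_upper x hx⟩
end
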